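/- Let A = Σ_{i=1}^m μ_i v_i u_i^T where μ_i ∈ F are nonzero, u_i, v_i ∈ F^n are (0,1)-vectors with u_i^T v_i = 1 and u_i^T v_j = 0 for all i ≠ j, and additionally the supports of the matrices v_i u_i^T are pairwise disjoint whenever μ_i ≠ μ_j is allowed (i.e., (v_i u_i^T) ∘ (v_j u_j^T) = 0 for i ≠ j). Then A^r = A^{(r)} for all positive integers r. -/

import Mathlib

/-!
For orthogonal idempotents `eᵢ` in an algebra, `(∑ cᵢ • eᵢ) ^ r = ∑ cᵢ ^ r • eᵢ` for `r ≥ 1`.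
The matrices `vᵢ uᵢᵀ` are orthogonal idempotents because `uᵢᵀ vⱼ = δᵢⱼ`; and for every position
`(a, b)` their `(a, b)` entries are orthogonal idempotents of `F`, since they lie in `{0, 1}` and
the Hadamard condition kills their pairwise products. Applying the power formula once to the
matrices and once entrywise gives `A ^ r = A^{(r)}`.
-/

open Matrix

namespace OrthogonalIdempotents

variable {R A I : Type*} [CommSemiring R] [Semiring A] [Algebra R A] [Fintype I] {e : I → A}

theorem sum_smul_mul_sum_smul (he : OrthogonalIdempotents e) (a b : I → R) :
    (∑ i, a i • e i) * ∑ j, b j • e j = ∑ i, (a i * b i) • e i := by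
  classical
  simp only [Finset.sum_mul, Finset.mul_sum, smul_mul_smul_comm, he.mul_eq, smul_ite,
    smul_zero, Finset.sum_ite_eq', Finset.mem_univ, if_true]

theorem sum_smul_pow (he : OrthogonalIdempotents e) (c : I → R) {r : ℕ} (hr : r ≠ 0) :
    (∑ i, c i • e i) ^ r = ∑ i, c i ^ r • e i := by
  induction r with
  | zero => exact absurd rfl hr
  | succ k ih =>
    rcases eq_or_ne k 0 with rfl | hk
    · simp
    · rw [pow_succ, ih hk, he.sum_smul_mul_sum_smul]
      simp only [← pow_succ]

end OrthogonalIdempotents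

theorem orthogonalIdempotents_vecMulVec {R n I : Type*} [CommSemiring R] [Fintype n]
    [DecidableEq n]
    {u v : I → n → R} (hii : ∀ i, u i ⬝ᵥ v i = 1) (hij : ∀ i j, i ≠ j → u i ⬝ᵥ v j = 0) :
    OrthogonalIdempotents fun i ↦ vecMulVec (v i) (u i) where
  idem i := by rw [IsIdempotentElem, vecMulVec_mul_vecMulVec, hii, one_smul]
  ortho i j hne := by
    simp only [vecMulVec_mul_vecMulVec, hij i j hne, zero_smul, vecMulVec_zero]

theorem orthogonalIdempotents_vecMulVec_apply {F n I : Type*} [Field F]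
    {u v : I → n → F} (hu : ∀ i j, u i j = 0 ∨ u i j = 1) (hv : ∀ i j, v i j = 0 ∨ v i j = 1)
    (hhad : ∀ i j, i ≠ j → vecMulVec (v i) (u i) ⊙ vecMulVec (v j) (u j) = 0) (a b : n) :
    OrthogonalIdempotents fun i ↦ vecMulVec (v i) (u i) a b where
  idem i := by
    rw [vecMulVec_apply]
    exact (IsIdempotentElem.iff_eq_zero_or_one.mpr (hv i a)).mul
      (IsIdempotentElem.iff_eq_zero_or_one.mpr (hu i b))
  ortho i j hne := congrFun₂ (hhad i j hne) a b

theorem stmt16_general {n m : ℕ} {F : Type*} [Field F]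
    (u v : Fin m → Fin n → F) (μ : Fin m → F)
    (hu : ∀ i j, u i j = 0 ∨ u i j = 1)
    (hv : ∀ i j, v i j = 0 ∨ v i j = 1)
    (hii : ∀ i, dotProduct (u i) (v i) = 1)
    (hij : ∀ i j, i ≠ j → dotProduct (u i) (v j) = 0)
    (hhad : ∀ i j, i ≠ j →
      Matrix.hadamard (Matrix.vecMulVec (v i) (u i)) (Matrix.vecMulVec (v j) (u j)) = 0)
    (A : Matrix (Fin n) (Fin n) F)
    (hA : A = ∑ i, μ i • Matrix.vecMulVec (v i) (u i)) :
    ∀ r : ℕ, 1 ≤ r → A ^ r = A.map (· ^ r) := by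
  intro r hr
  have hr0 : r ≠ 0 := Nat.one_le_iff_ne_zero.mp hr
  ext a b
  have hentry := (orthogonalIdempotents_vecMulVec_apply hu hv hhad a b).sum_smul_pow μ hr0
  rw [hA, (orthogonalIdempotents_vecMulVec hii hij).sum_smul_pow μ hr0]
  simpa only [map_apply, Matrix.sum_apply, Matrix.smul_apply, smul_eq_mul] using hentry.symm

theorem stmt16 {n m : ℕ} {F : Type*} [Field F]
    (u v : Fin m → Fin n → F) (μ : Fin m → F)
    (hu : ∀ i j, u i j = 0 ∨ u i j = 1)
    (hv : ∀ i j, v i j = 0 ∨ v i j = 1)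
    (hμ : ∀ i, μ i ≠ 0)
    (hii : ∀ i, dotProduct (u i) (v i) = 1)
    (hij : ∀ i j, i ≠ j → dotProduct (u i) (v j) = 0)
    (hhad : ∀ i j, i ≠ j →
      Matrix.hadamard (Matrix.vecMulVec (v i) (u i)) (Matrix.vecMulVec (v j) (u j)) = 0)
    (A : Matrix (Fin n) (Fin n) F)
    (hA : A = ∑ i, μ i • Matrix.vecMulVec (v i) (u i)) :
    ∀ r : ℕ, 1 ≤ r → A ^ r = A.map (· ^ r) :=
  stmt16_general u v μ hu hv hii hij hhad A hA
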